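/- Let I be an ideal of a Noetherian ring A. Then I_> ⊆ *I, i.e., every element a ∈ A with v̄_I(a) > 1 is weakly subintegral over I. -/

import Mathlib

/-!
If `v̄_I(a) > 1` then `ord_I(a^k) > k` for some `k ≥ 1`, i.e. `a^k ∈ I^(k+1)`, and writing
`i = k m + r` with `r < k ≤ m` gives `a^i ∈ I^i` for every `i ≥ k²`. Once `a^i ∈ I^i` for all
`i > q`, the coefficients `a_i := c_i a^i` with integers `c_i` vanishing for `1 ≤ i ≤ q` turn the
`n`-th weak subintegrality equation into `(∑_{i=0}^n C(n,i) c_i) a^n = 0`, and the `c_i` for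
`i > q` can be solved for recursively so that every such binomial sum with `n > q` vanishes.
-/

open Filter Polynomial

/-- An element `b` is weakly subintegral over a subset (subring) `R` of `B`:
there are `q ≥ 0` and `a_i ∈ R` (`1 ≤ i ≤ 2q+1`) with
`b^n + ∑_{i=1}^n (n choose i) a_i b^{n-i} = 0` for `q+1 ≤ n ≤ 2q+1`. -/
def WSubOver {B : Type*} [CommRing B] (R : Set B) (b : B) : Prop :=
  ∃ q : ℕ, ∃ a : ℕ → B, (∀ i, a i ∈ R) ∧
    ∀ n, q + 1 ≤ n → n ≤ 2 * q + 1 →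
      b ^ n + ∑ i ∈ Finset.Icc 1 n, (n.choose i : B) * a i * b ^ (n - i) = 0

/-- An element `b` is weakly subintegral over an ideal `I`:
there are `q ≥ 0` and `a_i ∈ I^i` with
`b^n + ∑_{i=1}^n (n choose i) a_i b^{n-i} = 0` for `q+1 ≤ n ≤ 2q+1`.
The set of such elements is the weak subintegral closure `*I`. -/
def WSubIdeal {A : Type*} [CommRing A] (I : Ideal A) (b : A) : Prop :=
  ∃ q : ℕ, ∃ a : ℕ → A, (∀ i, a i ∈ I ^ i) ∧
    ∀ n, q + 1 ≤ n → n ≤ 2 * q + 1 →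
      b ^ n + ∑ i ∈ Finset.Icc 1 n, (n.choose i : A) * a i * b ^ (n - i) = 0

/-- `a` is integral over the ideal `I`: `a^n + c_1 a^{n-1} + ⋯ + c_n = 0` with `c_i ∈ I^i`.
The set of such elements is the integral closure `Ī` of `I`. -/
def IntegralOverIdeal {A : Type*} [CommRing A] (I : Ideal A) (a : A) : Prop :=
  ∃ n : ℕ, 0 < n ∧ ∃ c : ℕ → A, (∀ i, c i ∈ I ^ i) ∧
    a ^ n + ∑ i ∈ Finset.Icc 1 n, c i * a ^ (n - i) = 0

/-- `J` is a reduction of `I`: `J ⊆ I` and `J̄ = Ī`. -/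
def IsReduction {A : Type*} [CommRing A] (J I : Ideal A) : Prop :=
  J ≤ I ∧ ∀ x, IntegralOverIdeal J x ↔ IntegralOverIdeal I x

/-- `J` is a minimal reduction of `I`. -/
def IsMinimalReduction {A : Type*} [CommRing A] (J I : Ideal A) : Prop :=
  IsReduction J I ∧ ∀ J' : Ideal A, IsReduction J' I → J' ≤ J → J' = J

/-- `ord_I(a) = max {n | a ∈ I^n}` (with value `∞` if `a ∈ ⋂ I^n`). -/
noncomputable def ordI {A : Type*} [CommRing A] (I : Ideal A) (a : A) : ℕ∞ :=
  ⨆ (n : ℕ) (_ : a ∈ I ^ n), (n : ℕ∞)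

/-- The sequence `ord_I(a^n)/n`, whose limit is the asymptotic Samuel function `v̄_I(a)`. -/
noncomputable def samuelSeq {A : Type*} [CommRing A] (I : Ideal A) (a : A) (n : ℕ) : ENNReal :=
  (ordI I (a ^ n) : ENNReal) / (n : ENNReal)

/-- `a ∈ I_>`, i.e. `v̄_I(a) > 1`, where `v̄_I(a)` is the limit of `ord_I(a^n)/n`
(this limit always exists in `[0,∞]`). -/
def MemIgt {A : Type*} [CommRing A] (I : Ideal A) (a : A) : Prop :=
  ∃ L : ENNReal, 1 < L ∧ Filter.Tendsto (samuelSeq I a) Filter.atTop (nhds L)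

open Finset

lemma mem_pow_succ_of_lt_ordI {A : Type*} [CommRing A] {I : Ideal A} {x : A} {k : ℕ}
    (h : (k : ℕ∞) < ordI I x) : x ∈ I ^ (k + 1) := by
  obtain ⟨n, hn⟩ := lt_iSup_iff.mp h
  obtain ⟨hx, hkn⟩ := lt_iSup_iff.mp hn
  exact Ideal.pow_le_pow_right (by exact_mod_cast hkn) hx

lemma MemIgt.exists_pow_mem_pow_succ {A : Type*} [CommRing A] {I : Ideal A} {a : A}
    (ha : MemIgt I a) : ∃ k, 0 < k ∧ a ^ k ∈ I ^ (k + 1) := by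
  obtain ⟨L, hL, hT⟩ := ha
  obtain ⟨k, hk, hk0⟩ := ((hT.eventually_const_lt hL).and (eventually_gt_atTop 0)).exists
  refine ⟨k, hk0, mem_pow_succ_of_lt_ordI ?_⟩
  have hk' : (k : ENNReal) < ordI I (a ^ k) := by
    rwa [samuelSeq, ENNReal.lt_div_iff_mul_lt (by simp [hk0.ne']) (by simp), one_mul] at hk
  exact_mod_cast hk'

lemma pow_mem_pow_of_pow_mem_pow_succ {A : Type*} [CommSemiring A] {I : Ideal A} {a : A}
    {k : ℕ} (hk : 0 < k) (h : a ^ k ∈ I ^ (k + 1)) {i : ℕ} (hi : k * k ≤ i) :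
    a ^ i ∈ I ^ i := by
  set m := i / k
  set r := i % k
  have hr : r < k := Nat.mod_lt i hk
  have hm : k ≤ m := (Nat.le_div_iff_mul_le hk).mpr hi
  have hsplit : a ^ i = (a ^ k) ^ m * a ^ r := by
    rw [← pow_mul, ← pow_add, Nat.div_add_mod]
  have hpow : (a ^ k) ^ m ∈ I ^ ((k + 1) * m) := pow_mul I (k + 1) m ▸ Ideal.pow_mem_pow h m
  rw [hsplit]
  refine Ideal.mul_mem_right _ _ (Ideal.pow_le_pow_right ?_ hpow)
  calc i = k * m + r := (Nat.div_add_mod i k).symm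
    _ ≤ (k + 1) * m := by nlinarith

/-- In closed form `binomialCancel q n = (-1)^(n+q) C(n-1, q)` for `n > q`. -/
def binomialCancel (q n : ℕ) : ℤ :=
  if n = 0 then 1 else if n ≤ q then 0 else -∑ i : Fin n, (n.choose i : ℤ) * binomialCancel q i

lemma binomialCancel_zero (q : ℕ) : binomialCancel q 0 = 1 := by
  rw [binomialCancel, if_pos rfl]

lemma binomialCancel_of_le {q n : ℕ} (h0 : n ≠ 0) (hn : n ≤ q) : binomialCancel q n = 0 := by
  rw [binomialCancel, if_neg h0, if_pos hn]

lemma binomialCancel_of_lt {q n : ℕ} (hn : q < n) :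
    binomialCancel q n = -∑ i : Fin n, (n.choose i : ℤ) * binomialCancel q i := by
  rw [binomialCancel, if_neg (by omega), if_neg (by omega)]

lemma sum_choose_mul_binomialCancel {q n : ℕ} (hn : q < n) :
    ∑ i ∈ range (n + 1), (n.choose i : ℤ) * binomialCancel q i = 0 := by
  rw [sum_range_succ, Nat.choose_self, Nat.cast_one, one_mul, binomialCancel_of_lt hn,
    Fin.sum_univ_eq_sum_range (fun i ↦ (n.choose i : ℤ) * binomialCancel q i), add_neg_cancel]

lemma one_add_sum_Icc_choose_mul_binomialCancel {q n : ℕ} (hn : q < n) :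
    1 + ∑ i ∈ Icc 1 n, (n.choose i : ℤ) * binomialCancel q i = 0 := by
  have := sum_choose_mul_binomialCancel hn
  rwa [range_eq_Ico, sum_eq_sum_Ico_succ_bot (by omega), Nat.choose_zero_right,
    binomialCancel_zero, Nat.cast_one, one_mul] at this

lemma wSubIdeal_of_forall_pow_mem_pow {A : Type*} [CommRing A] {I : Ideal A} {b : A} (q : ℕ)
    (h : ∀ i, q < i → b ^ i ∈ I ^ i) : WSubIdeal I b := by
  refine ⟨q, fun i ↦ binomialCancel q i * b ^ i, fun i ↦ ?_, fun n hn _ ↦ ?_⟩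
  · rcases Nat.eq_zero_or_pos i with rfl | hi
    · simp
    rcases le_or_gt i q with hiq | hiq
    · simp [binomialCancel_of_le hi.ne' hiq]
    · exact Ideal.mul_mem_left _ _ (h i hiq)
  · have hterm : ∀ i ∈ Icc 1 n, (n.choose i : A) * (binomialCancel q i * b ^ i) * b ^ (n - i) =
        ((n.choose i * binomialCancel q i : ℤ) : A) * b ^ n := fun i hi ↦ by
      rw [← Nat.add_sub_cancel' (mem_Icc.mp hi).2, pow_add, Nat.add_sub_cancel_left]
      push_cast
      ring
    have key := congrArg (Int.cast : ℤ → A) (one_add_sum_Icc_choose_mul_binomialCancel (q := q) hn)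
    rw [sum_congr rfl hterm, ← sum_mul]
    push_cast at key ⊢
    linear_combination b ^ n * key

theorem igt_subset_weakSubintegralClosure_general {A : Type*} [CommRing A]
    (I : Ideal A) (a : A) (ha : MemIgt I a) : WSubIdeal I a := by
  obtain ⟨k, hk, hak⟩ := ha.exists_pow_mem_pow_succ
  exact wSubIdeal_of_forall_pow_mem_pow (k * k) fun i hi ↦
    pow_mem_pow_of_pow_mem_pow_succ hk hak hi.le

/-- Proposition 4.6 / Lantz's conjecture, generalized:
for an ideal `I` of a Noetherian ring `A`, `I_> ⊆ *I`: every `a ∈ A` with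
`v̄_I(a) > 1` is weakly subintegral over `I`. -/
theorem igt_subset_weakSubintegralClosure {A : Type*} [CommRing A] [IsNoetherianRing A]
    (I : Ideal A) (a : A) (ha : MemIgt I a) : WSubIdeal I a :=
  igt_subset_weakSubintegralClosure_general I a ha
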